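/- arXiv:2312.02671 — 6 statements merged into one kernel-verified Lean document; each statement's English description precedes it below -/
import Mathlib

section
/- Suppose μ† ∈ M(Ω) and φ ∈ L²(ρ) satisfy the subgradient inclusion L_ρφ ∈ ∂J(μ†), i.e. ∫_Ω L_ρφ dν − J(ν) ≤ ∫_Ω L_ρφ dμ† − J(μ†) for all ν ∈ M(Ω). Then |L_ρφ(a,b)| ≤ V(a,b) for all (a,b) ∈ Ω, and L_ρφ(a,b) = V(a,b)·sgn(μ†)(a,b) for |μ†|-almost every (a,b) ∈ Ω, where sgn(μ†) = dμ†/d|μ†| is the polar density of μ†. -/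
/-!
As `J` is positively homogeneous, testing the subgradient inequality with `ν = 0` and `ν = 2μ†`
gives `∫ L_ρφ dμ† = J(μ†)`, and testing with `ν = ±δ_w` then gives `|L_ρφ(w)| ≤ V(w)`.
With the Jordan decomposition `μ† = μ⁺ - μ⁻` the identity reads
`∫ (V - L_ρφ) dμ⁺ + ∫ (V + L_ρφ) dμ⁻ = 0` with nonnegative integrands, so `L_ρφ = V` `μ⁺`-a.e.
and `L_ρφ = -V` `μ⁻`-a.e.; since `sgn(μ†)` is `1` on `μ⁺` and `-1` on `μ⁻`, this is the claim.
Every integral here is a genuine one (not Lean's junk `0`): `L_ρφ` is measurable as a parametric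
integral, and `|L_ρφ| ≤ V` is bounded on the compact set `Ω`.
-/

open MeasureTheory RealInnerProductSpace

noncomputable section

/-- Integral of a real function against a signed measure, via the Jordan decomposition. -/
def sInt {α : Type*} [MeasurableSpace α] (μ : SignedMeasure α) (g : α → ℝ) : ℝ :=
  (∫ w, g w ∂μ.toJordanDecomposition.posPart) - ∫ w, g w ∂μ.toJordanDecomposition.negPart

/-- Total variation norm of a signed measure. -/
def tvNorm {α : Type*} [MeasurableSpace α] (μ : SignedMeasure α) : ℝ :=
  (μ.totalVariation Set.univ).toReal

/-- Input space ℝ^d. -/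
abbrev Ed (d : ℕ) := EuclideanSpace ℝ (Fin d)

/-- Parameter space ℝ^d × ℝ. -/
abbrev Pd (d : ℕ) := EuclideanSpace ℝ (Fin d) × ℝ

/-- The weight V(a,b) = 1 + ‖a‖ + |b|. -/
def Vw {d : ℕ} (w : Pd d) : ℝ := 1 + ‖w.1‖ + |w.2|

/-- The Barron-norm functional J(μ) = ∫ V d|μ|. -/
def Jfun {d : ℕ} {Ω : Set (Pd d)} (μ : SignedMeasure ↥Ω) : ℝ :=
  ∫ w, Vw (w : Pd d) ∂μ.totalVariation

/-- (Kμ)(x) = ∫_Ω σ(aᵀx + b) dμ(a,b). -/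
def Kop {d : ℕ} (σ : ℝ → ℝ) {Ω : Set (Pd d)} (μ : SignedMeasure ↥Ω) (x : Ed d) : ℝ :=
  sInt μ (fun w => σ (⟪(w : Pd d).1, x⟫ + (w : Pd d).2))

/-- (L_ρ φ)(a,b) = ∫ φ(x) σ(aᵀx + b) dρ(x). -/
def Lop {d : ℕ} (σ : ℝ → ℝ) (ρ : Measure (Ed d)) (φ : Ed d → ℝ) (w : Pd d) : ℝ :=
  ∫ x, φ x * σ (⟪w.1, x⟫ + w.2) ∂ρ

/-- Squared L²(ρ) norm. -/
def L2sq {d : ℕ} (ρ : Measure (Ed d)) (g : Ed d → ℝ) : ℝ := ∫ x, g x ^ 2 ∂ρ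

/-- L²(ρ) norm. -/
def L2norm {d : ℕ} (ρ : Measure (Ed d)) (g : Ed d → ℝ) : ℝ := Real.sqrt (L2sq ρ g)

/-- The loss R_f(μ) = ½‖Kμ − f‖²_{L²(ρ)}. -/
def Rf {d : ℕ} (σ : ℝ → ℝ) {Ω : Set (Pd d)} (ρ : Measure (Ed d)) (f : Ed d → ℝ)
    (μ : SignedMeasure ↥Ω) : ℝ := (1 / 2) * L2sq ρ (fun x => Kop σ μ x - f x)

/-- Bregman divergence D_J^p(μ, ν) = J(μ) − J(ν) − ∫ p d(μ − ν). -/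
def DJ {d : ℕ} {Ω : Set (Pd d)} (p : Pd d → ℝ) (μ ν : SignedMeasure ↥Ω) : ℝ :=
  Jfun μ - Jfun ν - sInt (μ - ν) (fun w => p (w : Pd d))


/-- The polar density sgn(μ) = dμ/d|μ| of a signed measure. -/
def polarDensity {α : Type*} [MeasurableSpace α] (μ : SignedMeasure α) : α → ℝ :=
  fun w => (μ.toJordanDecomposition.posPart.rnDeriv μ.totalVariation w).toReal
    - (μ.toJordanDecomposition.negPart.rnDeriv μ.totalVariation w).toReal

open scoped NNReal

section JordanDecomposition

variable {α : Type*} [MeasurableSpace α]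

theorem MeasureTheory.Measure.toJordanDecomposition_toSignedMeasure (m : Measure α)
    [IsFiniteMeasure m] :
    m.toSignedMeasure.toJordanDecomposition = ⟨m, 0, .zero_right⟩ := by
  apply SignedMeasure.toJordanDecomposition_eq
  simp [JordanDecomposition.toSignedMeasure, Measure.toSignedMeasure_zero]

theorem MeasureTheory.Measure.totalVariation_toSignedMeasure (m : Measure α) [IsFiniteMeasure m] :
    m.toSignedMeasure.totalVariation = m := by
  simp [SignedMeasure.totalVariation, m.toJordanDecomposition_toSignedMeasure]

theorem MeasureTheory.SignedMeasure.totalVariation_smul (r : ℝ≥0) (μ : SignedMeasure α) :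
    (r • μ).totalVariation = r • μ.totalVariation := by
  simp [totalVariation, toJordanDecomposition_smul, smul_add]

theorem sInt_toSignedMeasure (m : Measure α) [IsFiniteMeasure m] (g : α → ℝ) :
    sInt m.toSignedMeasure g = ∫ x, g x ∂m := by
  simp [sInt, m.toJordanDecomposition_toSignedMeasure]

theorem sInt_neg (μ : SignedMeasure α) (g : α → ℝ) : sInt (-μ) g = -sInt μ g := by
  simp [sInt, SignedMeasure.toJordanDecomposition_neg]

theorem sInt_smul (r : ℝ≥0) (μ : SignedMeasure α) (g : α → ℝ) :
    sInt (r • μ) g = r * sInt μ g := by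
  rw [sInt, sInt, SignedMeasure.toJordanDecomposition_smul]
  simp [integral_smul_nnreal_measure, NNReal.smul_def, mul_sub]

theorem MeasureTheory.Measure.rnDeriv_add_ae_eq_one_of_mutuallySingular {P N : Measure α}
    [SigmaFinite P] [SigmaFinite N] (h : P ⟂ₘ N) : P.rnDeriv (P + N) =ᵐ[P] 1 :=
  (rnDeriv_add_right_of_mutuallySingular h).trans P.rnDeriv_self

theorem polarDensity_ae_eq_one (μ : SignedMeasure α) :
    polarDensity μ =ᵐ[μ.toJordanDecomposition.posPart] 1 := by
  set P := μ.toJordanDecomposition.posPart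
  set N := μ.toJordanDecomposition.negPart
  have h : P ⟂ₘ N := μ.toJordanDecomposition.mutuallySingular
  filter_upwards [Measure.rnDeriv_add_ae_eq_one_of_mutuallySingular h,
    Measure.rnDeriv_eq_zero_of_mutuallySingular h.symm (.add_right .rfl N)] with w h1 h0
  simp [polarDensity, SignedMeasure.totalVariation, P, N, h1, h0]

theorem polarDensity_ae_eq_neg_one (μ : SignedMeasure α) :
    polarDensity μ =ᵐ[μ.toJordanDecomposition.negPart] -1 := by
  set P := μ.toJordanDecomposition.posPart
  set N := μ.toJordanDecomposition.negPart
  have h : P ⟂ₘ N := μ.toJordanDecomposition.mutuallySingular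
  have h1 : N.rnDeriv (P + N) =ᵐ[N] 1 :=
    add_comm N P ▸ Measure.rnDeriv_add_ae_eq_one_of_mutuallySingular h.symm
  filter_upwards [h1, Measure.rnDeriv_eq_zero_of_mutuallySingular h (.add_right' .rfl P)]
    with w h1 h0
  simp [polarDensity, SignedMeasure.totalVariation, P, N, h1, h0]

end JordanDecomposition

section Subgradient

variable {d : ℕ} {Ω : Set (Pd d)}

theorem continuous_Vw : Continuous (Vw : Pd d → ℝ) := by
  unfold Vw; fun_prop

theorem Vw_nonneg (w : Pd d) : 0 ≤ Vw w := by
  unfold Vw; positivity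

theorem Jfun_smul (r : ℝ≥0) (μ : SignedMeasure Ω) : Jfun (r • μ) = r * Jfun μ := by
  rw [Jfun, Jfun, SignedMeasure.totalVariation_smul, integral_smul_nnreal_measure, NNReal.smul_def,
    smul_eq_mul]

theorem Jfun_neg (μ : SignedMeasure Ω) : Jfun (-μ) = Jfun μ := by
  simp [Jfun, SignedMeasure.totalVariation_neg]

theorem Jfun_dirac (w : Ω) : Jfun (Measure.dirac w).toSignedMeasure = Vw (w : Pd d) := by
  simp [Jfun, Measure.totalVariation_toSignedMeasure]

theorem integrable_of_abs_le_Vw (hΩ : IsCompact Ω) {m : Measure Ω} [IsFiniteMeasure m]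
    {f : Ω → ℝ} (hf : AEStronglyMeasurable f m) (hfV : ∀ w : Ω, |f w| ≤ Vw (w : Pd d)) :
    Integrable f m := by
  obtain ⟨C, hC⟩ := hΩ.exists_bound_of_continuousOn continuous_Vw.continuousOn
  exact .of_bound hf C <| ae_of_all _ fun w => (hfV w).trans <| (le_abs_self _).trans (hC w w.2)

def IsSubgradientJfun (p : Pd d → ℝ) (μ : SignedMeasure Ω) : Prop :=
  ∀ ν : SignedMeasure Ω, sInt ν (fun w => p w) - Jfun ν ≤ sInt μ (fun w => p w) - Jfun μ

namespace IsSubgradientJfun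

variable {p : Pd d → ℝ} {μ : SignedMeasure Ω}

theorem sInt_eq_Jfun (h : IsSubgradientJfun p μ) : sInt μ (fun w => p w) = Jfun μ := by
  have h0 := h ((0 : ℝ≥0) • μ)
  have h2 := h ((2 : ℝ≥0) • μ)
  simp only [sInt_smul, Jfun_smul, NNReal.coe_zero, NNReal.coe_ofNat] at h0 h2
  linarith

theorem abs_le_Vw (h : IsSubgradientJfun p μ) : ∀ w ∈ Ω, |p w| ≤ Vw w := by
  intro w hw
  have hδ := h (Measure.dirac (⟨w, hw⟩ : Ω)).toSignedMeasure
  have hδneg := h (-(Measure.dirac (⟨w, hw⟩ : Ω)).toSignedMeasure)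
  simp only [sInt_neg, Jfun_neg, sInt_toSignedMeasure, integral_dirac, Jfun_dirac,
    h.sInt_eq_Jfun, sub_self] at hδ hδneg
  exact abs_le.mpr ⟨by linarith, by linarith⟩

theorem ae_eq_Vw_mul_polarDensity (h : IsSubgradientJfun p μ) (hΩ : IsCompact Ω)
    (hp : Measurable p) :
    ∀ᵐ (w : Ω) ∂μ.totalVariation, p (w : Pd d) = Vw (w : Pd d) * polarDensity μ w := by
  set P := μ.toJordanDecomposition.posPart
  set N := μ.toJordanDecomposition.negPart
  have hpV : ∀ w : Ω, |p w| ≤ Vw (w : Pd d) := fun w => h.abs_le_Vw w w.2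
  have hpm : Measurable fun w : Ω => p w := hp.comp measurable_subtype_coe
  have hVm : Measurable fun w : Ω => Vw (w : Pd d) :=
    (continuous_Vw.comp continuous_subtype_val).measurable
  have hVabs : ∀ w : Ω, |Vw (w : Pd d)| ≤ Vw (w : Pd d) := fun w => (abs_of_nonneg (Vw_nonneg _)).le
  have hpP := integrable_of_abs_le_Vw hΩ (m := P) hpm.aestronglyMeasurable hpV
  have hpN := integrable_of_abs_le_Vw hΩ (m := N) hpm.aestronglyMeasurable hpV
  have hVP := integrable_of_abs_le_Vw hΩ (m := P) hVm.aestronglyMeasurable hVabs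
  have hVN := integrable_of_abs_le_Vw hΩ (m := N) hVm.aestronglyMeasurable hVabs
  have hsplit : ∫ w, p w ∂P - ∫ w, p w ∂N = ∫ w, Vw (w : Pd d) ∂P + ∫ w, Vw (w : Pd d) ∂N := by
    rw [← integral_add_measure hVP hVN]
    exact h.sInt_eq_Jfun
  have hleP : ∫ w, p w ∂P ≤ ∫ w, Vw (w : Pd d) ∂P :=
    integral_mono hpP hVP fun w => (le_abs_self _).trans (hpV w)
  have hleN : ∫ w, -p w ∂N ≤ ∫ w, Vw (w : Pd d) ∂N :=
    integral_mono hpN.neg hVN fun w => (neg_le_abs _).trans (hpV w)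
  rw [integral_neg] at hleN
  have hEqP : ∫ w, p w ∂P = ∫ w, Vw (w : Pd d) ∂P := by linarith
  have hEqN : ∫ w, -p w ∂N = ∫ w, Vw (w : Pd d) ∂N := by rw [integral_neg]; linarith
  have hP : (fun w : Ω => p w) =ᵐ[P] fun w => Vw (w : Pd d) :=
    (integral_eq_iff_of_ae_le hpP hVP (ae_of_all _ fun w => (le_abs_self _).trans (hpV w))).mp hEqP
  have hN : (fun w : Ω => -p w) =ᵐ[N] fun w => Vw (w : Pd d) :=
    (integral_eq_iff_of_ae_le hpN.neg hVN (ae_of_all _ fun w => (neg_le_abs _).trans (hpV w))).mp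
      hEqN
  refine ae_add_measure_iff.mpr ⟨?_, ?_⟩
  · filter_upwards [hP, polarDensity_ae_eq_one μ] with w hw hs
    simp [hw, hs]
  · filter_upwards [hN, polarDensity_ae_eq_neg_one μ] with w hw hs
    simp [← hw, hs]

end IsSubgradientJfun

end Subgradient

theorem measurable_Lop {d : ℕ} {σ : ℝ → ℝ} (hσ : Measurable σ) (ρ : Measure (Ed d)) [SFinite ρ]
    {φ : Ed d → ℝ} (hφ : Measurable φ) : Measurable (Lop σ ρ φ) := by
  refine (StronglyMeasurable.integral_prod_right' (f := fun z : Pd d × Ed d =>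
    φ z.2 * σ (⟪z.1.1, z.2⟫ + z.1.2)) ?_).measurable
  exact ((hφ.comp measurable_snd).mul (hσ.comp (by fun_prop))).stronglyMeasurable

theorem source_condition_general
    {d : ℕ} (Ω : Set (Pd d)) (hΩ : IsCompact Ω)
    (ρ : Measure (Ed d)) [IsProbabilityMeasure ρ]
    (σ : ℝ → ℝ) (Lσ : NNReal) (hσ : LipschitzWith Lσ σ)
    (φ : Ed d → ℝ) (hφm : Measurable φ)
    (μdag : SignedMeasure ↥Ω)
    (hsub : ∀ ν : SignedMeasure ↥Ω,
      sInt ν (fun w => Lop σ ρ φ (w : Pd d)) - Jfun ν ≤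
        sInt μdag (fun w => Lop σ ρ φ (w : Pd d)) - Jfun μdag) :
    (∀ w ∈ Ω, |Lop σ ρ φ w| ≤ Vw w) ∧
      ∀ᵐ (w : ↥Ω) ∂μdag.totalVariation,
        Lop σ ρ φ (w : Pd d) = Vw (w : Pd d) * polarDensity μdag w :=
  have hsub : IsSubgradientJfun (Lop σ ρ φ) μdag := hsub
  ⟨hsub.abs_le_Vw,
    hsub.ae_eq_Vw_mul_polarDensity hΩ (measurable_Lop hσ.continuous.measurable ρ hφm)⟩

/-- If L_ρφ ∈ ∂J(μ†), then |L_ρφ| ≤ V on Ω and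
L_ρφ = V·sgn(μ†) holds |μ†|-almost everywhere (source condition). -/
theorem source_condition
    {d : ℕ} (Ω : Set (Pd d)) (hΩ : IsCompact Ω)
    (ρ : Measure (Ed d)) [IsProbabilityMeasure ρ]
    (hρ2 : Integrable (fun x : Ed d => ‖x‖ ^ 2) ρ)
    (σ : ℝ → ℝ) (Lσ : NNReal) (hσ : LipschitzWith Lσ σ)
    (φ : Ed d → ℝ) (hφm : Measurable φ) (hφ2 : MemLp φ 2 ρ)
    (μdag : SignedMeasure ↥Ω)
    (hsub : ∀ ν : SignedMeasure ↥Ω,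
      sInt ν (fun w => Lop σ ρ φ (w : Pd d)) - Jfun ν ≤
        sInt μdag (fun w => Lop σ ρ φ (w : Pd d)) - Jfun μdag) :
    (∀ w ∈ Ω, |Lop σ ρ φ w| ≤ Vw w) ∧
      ∀ᵐ (w : ↥Ω) ∂μdag.totalVariation,
        Lop σ ρ φ (w : Pd d) = Vw (w : Pd d) * polarDensity μdag w :=
  source_condition_general Ω hΩ ρ σ Lσ hσ φ hφm μdag hsub
end
end

section
/- Let t ≥ 0, r ∈ L²(ρ) with ‖r‖_{L²(ρ)} ≤ t‖f‖_{L²(ρ)}, and μ ∈ M(Ω) such that J(μ) = ∫_Ω L_ρ r dμ (Fenchel equality, i.e. L_ρ r ∈ ∂J(μ) with equality in the pairing) and ‖Kμ − f‖_{L²(ρ)} ≤ ‖f‖_{L²(ρ)}. Then ‖μ‖_{M(Ω)} ≤ J(μ) ≤ 2t‖f‖²_{L²(ρ)}. -/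
open MeasureTheory RealInnerProductSpace

noncomputable section

/-! The Fenchel equality and Fubini turn `J(μ) = ∫ L_ρ r dμ` into the `L²(ρ)` pairing
`⟪r, Kμ⟫`, which Cauchy–Schwarz bounds by `‖r‖ ‖Kμ‖ ≤ t‖f‖ · 2‖f‖`, the factor `2` coming from
`‖Kμ‖ ≤ ‖Kμ - f‖ + ‖f‖`. The lower bound `‖μ‖ ≤ J(μ)` is `V ≥ 1`. Compactness of `Ω` and the
second moment of `ρ` make every neuron `x ↦ σ(aᵀx + b)`, `(a, b) ∈ Ω`, dominated by one affine
function of `‖x‖` lying in `L²(ρ)`, which justifies Fubini and puts `Kμ` in `L²(ρ)`. -/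

section L2

variable {d : ℕ} {ρ : Measure (Ed d)}

lemma L2norm_nonneg (ρ : Measure (Ed d)) (g : Ed d → ℝ) : 0 ≤ L2norm ρ g :=
  Real.sqrt_nonneg _

lemma L2norm_eq_rpow (ρ : Measure (Ed d)) (g : Ed d → ℝ) :
    L2norm ρ g = (∫ x, ‖g x‖ ^ (2 : ℝ) ∂ρ) ^ (1 / 2 : ℝ) := by
  simp only [L2norm, L2sq, Real.sqrt_eq_rpow, Real.rpow_two, Real.norm_eq_abs, sq_abs]

lemma L2norm_eq_toReal_eLpNorm {g : Ed d → ℝ} (hg : MemLp g 2 ρ) :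
    L2norm ρ g = (eLpNorm g 2 ρ).toReal := by
  rw [hg.eLpNorm_eq_integral_rpow_norm two_ne_zero ENNReal.ofNat_ne_top,
    ENNReal.toReal_ofReal (by positivity), L2norm_eq_rpow]
  norm_num

lemma L2norm_add_le {u v : Ed d → ℝ} (hu : MemLp u 2 ρ) (hv : MemLp v 2 ρ) :
    L2norm ρ (u + v) ≤ L2norm ρ u + L2norm ρ v := by
  rw [L2norm_eq_toReal_eLpNorm (hu.add hv), L2norm_eq_toReal_eLpNorm hu,
    L2norm_eq_toReal_eLpNorm hv, ← ENNReal.toReal_add hu.eLpNorm_ne_top hv.eLpNorm_ne_top]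
  exact ENNReal.toReal_mono (by finiteness)
    (eLpNorm_add_le hu.aestronglyMeasurable hv.aestronglyMeasurable one_le_two)

lemma abs_integral_mul_le_L2norm_mul {g h : Ed d → ℝ} (hg : MemLp g 2 ρ) (hh : MemLp h 2 ρ) :
    |∫ x, g x * h x ∂ρ| ≤ L2norm ρ g * L2norm ρ h := by
  calc |∫ x, g x * h x ∂ρ| ≤ ∫ x, ‖g x‖ * ‖h x‖ ∂ρ := by
        simpa only [Real.norm_eq_abs, abs_mul] using
          norm_integral_le_integral_norm (μ := ρ) fun x => g x * h x
    _ ≤ L2norm ρ g * L2norm ρ h := by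
        rw [L2norm_eq_rpow, L2norm_eq_rpow]
        exact integral_mul_norm_le_Lp_mul_Lq Real.HolderConjugate.two_two
          (by simpa using hg) (by simpa using hh)

end L2

section Neuron

variable {d : ℕ}

def neuron (σ : ℝ → ℝ) (w : Pd d) (x : Ed d) : ℝ := σ (⟪w.1, x⟫ + w.2)

lemma continuous_neuron {σ : ℝ → ℝ} (hσ : Continuous σ) :
    Continuous fun p : Pd d × Ed d => neuron σ p.1 p.2 := by
  unfold neuron; fun_prop

lemma abs_inner_add_le (w : Pd d) (x : Ed d) : |⟪w.1, x⟫ + w.2| ≤ ‖w‖ * (‖x‖ + 1) :=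
  calc |⟪w.1, x⟫ + w.2| ≤ ‖w.1‖ * ‖x‖ + ‖w.2‖ :=
        (abs_add_le _ _).trans (add_le_add (abs_real_inner_le_norm _ _) le_rfl)
    _ ≤ ‖w‖ * ‖x‖ + ‖w‖ := by gcongr; exacts [norm_fst_le w, norm_snd_le w]
    _ = ‖w‖ * (‖x‖ + 1) := by ring

lemma abs_neuron_le {σ : ℝ → ℝ} {L : NNReal} (hσ : LipschitzWith L σ) {C : ℝ} {w : Pd d}
    (hw : ‖w‖ ≤ C) (x : Ed d) : |neuron σ w x| ≤ |σ 0| + L * C * (‖x‖ + 1) := by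
  set u := ⟪w.1, x⟫ + w.2
  have hLip : |σ u| - |σ 0| ≤ L * |u| := by
    simpa only [Real.dist_eq, sub_zero] using
      (abs_sub_abs_le_abs_sub _ _).trans (hσ.dist_le_mul u 0)
  calc |σ u| ≤ |σ 0| + L * (‖w‖ * (‖x‖ + 1)) := by
        have := abs_inner_add_le w x; have : (0 : ℝ) ≤ L := L.2; nlinarith
    _ ≤ |σ 0| + L * (C * (‖x‖ + 1)) := by gcongr
    _ = |σ 0| + L * C * (‖x‖ + 1) := by ring

end Neuron

section ParameterMeasure

variable {d : ℕ} {Ω : Set (Pd d)} {ρ : Measure (Ed d)} [IsFiniteMeasure ρ]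
  {σ : ℝ → ℝ} {L : NNReal} {C : ℝ}

lemma memLp_two_affine_norm (hρ2 : Integrable (fun x : Ed d => ‖x‖ ^ 2) ρ) (A B : ℝ) :
    MemLp (fun x : Ed d => A + B * (‖x‖ + 1)) 2 ρ := by
  have hnorm : MemLp (fun x : Ed d => ‖x‖) 2 ρ :=
    (memLp_two_iff_integrable_sq measurable_norm.aestronglyMeasurable).2 hρ2
  exact (memLp_const A).add ((hnorm.add (memLp_const 1)).const_mul B)

lemma continuous_neuron_subtype (hσ : Continuous σ) :
    Continuous fun p : Ω × Ed d => neuron σ (p.1 : Pd d) p.2 :=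
  (continuous_neuron hσ).comp (continuous_subtype_val.prodMap continuous_id)

lemma memLp_integral_neuron (hC : ∀ w ∈ Ω, ‖w‖ ≤ C) (hσ : LipschitzWith L σ)
    (hρ2 : Integrable (fun x : Ed d => ‖x‖ ^ 2) ρ) (Q : Measure Ω) [IsFiniteMeasure Q] :
    MemLp (fun x : Ed d => ∫ w : Ω, neuron σ (w : Pd d) x ∂Q) 2 ρ := by
  have hcont : Continuous fun p : Ed d × Ω => neuron σ (p.2 : Pd d) p.1 :=
    (continuous_neuron_subtype hσ.continuous).comp continuous_swap
  have hmeas : StronglyMeasurable fun x : Ed d => ∫ w : Ω, neuron σ (w : Pd d) x ∂Q :=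
    hcont.stronglyMeasurable.integral_prod_right'
  refine ((memLp_two_affine_norm hρ2 (|σ 0|) (L * C)).const_mul (Q.real Set.univ)).mono'
    hmeas.aestronglyMeasurable (ae_of_all _ fun x => ?_)
  rw [mul_comm]
  exact norm_integral_le_of_norm_le_const (ae_of_all _ fun w => abs_neuron_le hσ (hC w w.2) x)

lemma integral_Lop_eq_integral_mul (hC : ∀ w ∈ Ω, ‖w‖ ≤ C) (hσ : LipschitzWith L σ)
    (hρ2 : Integrable (fun x : Ed d => ‖x‖ ^ 2) ρ) {r : Ed d → ℝ} (hr2 : MemLp r 2 ρ)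
    (Q : Measure Ω) [IsFiniteMeasure Q] :
    ∫ w : Ω, Lop σ ρ r w ∂Q = ∫ x, r x * ∫ w : Ω, neuron σ (w : Pd d) x ∂Q ∂ρ := by
  have hdom : Integrable (fun p : Ω × Ed d => ‖r p.2‖ * (|σ 0| + L * C * (‖p.2‖ + 1)))
      (Q.prod ρ) :=
    (hr2.norm.integrable_mul (memLp_two_affine_norm hρ2 (|σ 0|) (L * C))).comp_snd Q
  have hF : Integrable (fun p : Ω × Ed d => r p.2 * neuron σ (p.1 : Pd d) p.2) (Q.prod ρ) := by
    refine hdom.mono' (hr2.1.comp_snd.mul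
      (continuous_neuron_subtype hσ.continuous).aestronglyMeasurable) (ae_of_all _ fun p => ?_)
    rw [norm_mul]
    exact mul_le_mul_of_nonneg_left (abs_neuron_le hσ (hC _ p.1.2) p.2) (norm_nonneg _)
  simp_rw [← integral_const_mul]
  exact integral_integral_swap hF

lemma memLp_Kop (hC : ∀ w ∈ Ω, ‖w‖ ≤ C) (hσ : LipschitzWith L σ)
    (hρ2 : Integrable (fun x : Ed d => ‖x‖ ^ 2) ρ) (μ : SignedMeasure Ω) :
    MemLp (Kop σ μ) 2 ρ :=
  (memLp_integral_neuron hC hσ hρ2 _).sub (memLp_integral_neuron hC hσ hρ2 _)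

lemma sInt_Lop_eq_integral_mul_Kop (hC : ∀ w ∈ Ω, ‖w‖ ≤ C) (hσ : LipschitzWith L σ)
    (hρ2 : Integrable (fun x : Ed d => ‖x‖ ^ 2) ρ) {r : Ed d → ℝ} (hr2 : MemLp r 2 ρ)
    (μ : SignedMeasure Ω) :
    sInt μ (fun w => Lop σ ρ r w) = ∫ x, r x * Kop σ μ x ∂ρ := by
  have hint (Q : Measure Ω) [IsFiniteMeasure Q] :
      Integrable (fun x => r x * ∫ w : Ω, neuron σ (w : Pd d) x ∂Q) ρ :=
    hr2.integrable_mul (memLp_integral_neuron hC hσ hρ2 Q)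
  rw [sInt, integral_Lop_eq_integral_mul hC hσ hρ2 hr2,
    integral_Lop_eq_integral_mul hC hσ hρ2 hr2, ← integral_sub (hint _) (hint _)]
  simp only [Kop, sInt, mul_sub]
  rfl

end ParameterMeasure

lemma tvNorm_le_integral_of_one_le {α : Type*} [MeasurableSpace α] (μ : SignedMeasure α)
    {g : α → ℝ} (hg : Integrable g μ.totalVariation) (h1 : ∀ w, 1 ≤ g w) :
    tvNorm μ ≤ ∫ w, g w ∂μ.totalVariation :=
  calc tvNorm μ = ∫ _w, (1 : ℝ) ∂μ.totalVariation := by simp [tvNorm, Measure.real]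
    _ ≤ ∫ w, g w ∂μ.totalVariation := integral_mono (integrable_const 1) hg h1

section Weight

variable {d : ℕ}

lemma one_le_Vw (w : Pd d) : 1 ≤ Vw w := by
  unfold Vw; have := norm_nonneg w.1; have := abs_nonneg w.2; linarith

lemma Vw_le (w : Pd d) : Vw w ≤ 1 + 2 * ‖w‖ := by
  unfold Vw; have := norm_fst_le w; have := norm_snd_le w; rw [Real.norm_eq_abs] at *; linarith

lemma integrable_Vw {Ω : Set (Pd d)} {C : ℝ} (hC : ∀ w ∈ Ω, ‖w‖ ≤ C) (ν : Measure Ω)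
    [IsFiniteMeasure ν] : Integrable (fun w : Ω => Vw (w : Pd d)) ν := by
  refine Integrable.of_bound (by unfold Vw; fun_prop : Continuous _).aestronglyMeasurable
    (1 + 2 * C) (ae_of_all _ fun w => ?_)
  rw [Real.norm_eq_abs, abs_of_nonneg (zero_le_one.trans (one_le_Vw _))]
  linarith [Vw_le (w : Pd d), hC w w.2]

lemma tvNorm_le_Jfun {Ω : Set (Pd d)} {C : ℝ} (hC : ∀ w ∈ Ω, ‖w‖ ≤ C) (μ : SignedMeasure Ω) :
    tvNorm μ ≤ Jfun μ :=
  tvNorm_le_integral_of_one_le μ (integrable_Vw hC _) fun w => one_le_Vw (w : Pd d)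

end Weight

theorem regularity_norm_bound_general
    {d : ℕ} (Ω : Set (Pd d)) (hΩ : IsCompact Ω)
    (ρ : Measure (Ed d)) [IsProbabilityMeasure ρ]
    (hρ2 : Integrable (fun x : Ed d => ‖x‖ ^ 2) ρ)
    (σ : ℝ → ℝ) (Lσ : NNReal) (hσ : LipschitzWith Lσ σ)
    (f : Ed d → ℝ) (hf2 : MemLp f 2 ρ)
    (t : ℝ)
    (r : Ed d → ℝ) (hr2 : MemLp r 2 ρ)
    (hrb : L2norm ρ r ≤ t * L2norm ρ f)
    (μ : SignedMeasure ↥Ω)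
    (hFenchel : Jfun μ = sInt μ (fun w => Lop σ ρ r (w : Pd d)))
    (hres : L2norm ρ (fun x => Kop σ μ x - f x) ≤ L2norm ρ f) :
    tvNorm μ ≤ Jfun μ ∧ Jfun μ ≤ 2 * t * L2norm ρ f ^ 2 := by
  obtain ⟨C, hC⟩ := hΩ.isBounded.exists_norm_le
  refine ⟨tvNorm_le_Jfun hC μ, ?_⟩
  have hK := memLp_Kop hC hσ hρ2 μ
  have hKf : L2norm ρ (Kop σ μ) ≤ 2 * L2norm ρ f :=
    calc L2norm ρ (Kop σ μ) = L2norm ρ ((Kop σ μ - f) + f) := by rw [sub_add_cancel]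
      _ ≤ L2norm ρ (Kop σ μ - f) + L2norm ρ f := L2norm_add_le (hK.sub hf2) hf2
      _ ≤ L2norm ρ f + L2norm ρ f := add_le_add_left hres _
      _ = 2 * L2norm ρ f := (two_mul _).symm
  calc Jfun μ = ∫ x, r x * Kop σ μ x ∂ρ :=
        hFenchel.trans (sInt_Lop_eq_integral_mul_Kop hC hσ hρ2 hr2 μ)
    _ ≤ L2norm ρ r * L2norm ρ (Kop σ μ) :=
        (le_abs_self _).trans (abs_integral_mul_le_L2norm_mul hr2 hK)
    _ ≤ L2norm ρ r * (2 * L2norm ρ f) := mul_le_mul_of_nonneg_left hKf (L2norm_nonneg ρ r)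
    _ ≤ t * L2norm ρ f * (2 * L2norm ρ f) :=
        mul_le_mul_of_nonneg_right hrb (by linarith [L2norm_nonneg ρ f])
    _ = 2 * t * L2norm ρ f ^ 2 := by ring

/-- If ‖r‖_{L²(ρ)} ≤ t‖f‖_{L²(ρ)}, J(μ) = ∫ L_ρ r dμ (Fenchel equality) and
‖Kμ − f‖_{L²(ρ)} ≤ ‖f‖_{L²(ρ)}, then ‖μ‖_{M(Ω)} ≤ J(μ) ≤ 2t‖f‖²_{L²(ρ)}. -/
theorem regularity_norm_bound
    {d : ℕ} (Ω : Set (Pd d)) (hΩ : IsCompact Ω)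
    (ρ : Measure (Ed d)) [IsProbabilityMeasure ρ]
    (hρ2 : Integrable (fun x : Ed d => ‖x‖ ^ 2) ρ)
    (σ : ℝ → ℝ) (Lσ : NNReal) (hσ : LipschitzWith Lσ σ)
    (f : Ed d → ℝ) (hfm : Measurable f) (hf2 : MemLp f 2 ρ)
    (t : ℝ) (ht : 0 ≤ t)
    (r : Ed d → ℝ) (hrm : Measurable r) (hr2 : MemLp r 2 ρ)
    (hrb : L2norm ρ r ≤ t * L2norm ρ f)
    (μ : SignedMeasure ↥Ω)
    (hFenchel : Jfun μ = sInt μ (fun w => Lop σ ρ r (w : Pd d)))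
    (hres : L2norm ρ (fun x => Kop σ μ x - f x) ≤ L2norm ρ f) :
    tvNorm μ ≤ Jfun μ ∧ Jfun μ ≤ 2 * t * L2norm ρ f ^ 2 :=
  regularity_norm_bound_general Ω hΩ ρ hρ2 σ Lσ hσ f hf2 t r hr2 hrb μ hFenchel hres

end
end

section
/- Let μ† ∈ M(Ω) minimize R_f with J(μ†) < ∞. Let μ : [0,∞) → M(Ω) and p : [0,∞) → C(Ω) with μ_0 = 0 and p_0 = 0, and assume: (i) t ↦ R_f(μ_t) is nonincreasing; (ii) p_t ∈ ∂J(μ_t) for all t (so that D_J^{p_t}(μ†,μ_t) ≥ 0); (iii) for all 0 ≤ s < t, D_J^{p_t}(μ†,μ_t) − D_J^{p_s}(μ†,μ_s) ≤ ∫_s^t (R_f(μ†) − R_f(μ_τ)) dτ. Then R_f(μ_t) ≤ R_f(μ†) + J(μ†)/t for every t > 0. -/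
open MeasureTheory RealInnerProductSpace

noncomputable section

/-! The Bregman divergence `D_J^{p_t}(μ†, μ_t)` starts at `J(μ†)` and stays nonnegative, while the
dissipation inequality and the monotonicity of the loss make it drop by at least
`t (R(μ_t) − R(μ†))` over `[0, t]`. -/

lemma AntitoneOn.mul_le_intervalIntegral {g : ℝ → ℝ} {a b : ℝ} (hab : a ≤ b)
    (hg : AntitoneOn g (Set.Icc a b)) : (b - a) * g b ≤ ∫ τ in a..b, g τ := by
  have hint : IntervalIntegrable g MeasureTheory.volume a b :=
    AntitoneOn.intervalIntegrable (by rwa [Set.uIcc_of_le hab])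
  calc (b - a) * g b = ∫ _ in a..b, g b := by simp [smul_eq_mul]
    _ ≤ ∫ τ in a..b, g τ :=
      intervalIntegral.integral_mono_on hab intervalIntegrable_const hint
        fun τ hτ => hg hτ ⟨hab, le_rfl⟩ hτ.2

lemma le_add_div_of_sub_le_integral {R : ℝ → ℝ} {c D₀ Dₜ t : ℝ} (ht : 0 < t)
    (hR : AntitoneOn R (Set.Icc 0 t)) (hDₜ : 0 ≤ Dₜ)
    (hD : Dₜ - D₀ ≤ ∫ τ in (0 : ℝ)..t, (c - R τ)) : R t ≤ c + D₀ / t := by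
  have hgap : ∫ τ in (0 : ℝ)..t, (c - R τ) ≤ t * (c - R t) := by
    have hint : IntervalIntegrable R MeasureTheory.volume 0 t :=
      AntitoneOn.intervalIntegrable (by rwa [Set.uIcc_of_le ht.le])
    have := hR.mul_le_intervalIntegral ht.le
    rw [intervalIntegral.integral_sub intervalIntegrable_const hint]
    simp only [intervalIntegral.integral_const, smul_eq_mul, sub_zero] at this ⊢
    linarith
  rw [← sub_le_iff_le_add', le_div_iff₀ ht]
  linarith

lemma DJ_nonneg_of_forall_le {d : ℕ} {Ω : Set (Pd d)} {p : Pd d → ℝ} {ν : SignedMeasure ↥Ω}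
    (hp : ∀ lam : SignedMeasure ↥Ω, Jfun ν + sInt (lam - ν) (fun w => p (w : Pd d)) ≤ Jfun lam)
    (μ : SignedMeasure ↥Ω) : 0 ≤ DJ p μ ν := by
  have := hp μ
  unfold DJ
  linarith

lemma DJ_zero_zero {d : ℕ} {Ω : Set (Pd d)} (μ : SignedMeasure ↥Ω) :
    DJ (fun _ => 0) μ 0 = Jfun μ := by
  simp [DJ, Jfun, sInt, SignedMeasure.totalVariation_zero]

theorem ideal_loss_rate_general
    {d : ℕ} (Ω : Set (Pd d))
    (ρ : Measure (Ed d))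
    (σ : ℝ → ℝ)
    (f : Ed d → ℝ)
    (μdag : SignedMeasure ↥Ω)
    (μ : ℝ → SignedMeasure ↥Ω) (p : ℝ → Pd d → ℝ)
    (hμ0 : μ 0 = 0) (hp0 : ∀ w : Pd d, p 0 w = 0)
    (hRdec : ∀ s t : ℝ, 0 ≤ s → s ≤ t → Rf σ ρ f (μ t) ≤ Rf σ ρ f (μ s))
    (hsub : ∀ t : ℝ, 0 ≤ t → ∀ lam : SignedMeasure ↥Ω,
      Jfun (μ t) + sInt (lam - μ t) (fun w => p t (w : Pd d)) ≤ Jfun lam)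
    (hD : ∀ s t : ℝ, 0 ≤ s → s < t →
      DJ (p t) μdag (μ t) - DJ (p s) μdag (μ s) ≤
        ∫ τ in s..t, (Rf σ ρ f μdag - Rf σ ρ f (μ τ))) :
    ∀ t : ℝ, 0 < t → Rf σ ρ f (μ t) ≤ Rf σ ρ f μdag + Jfun μdag / t := by
  intro t ht
  have hD₀ : DJ (p 0) μdag (μ 0) = Jfun μdag := by
    rw [hμ0, funext hp0, DJ_zero_zero]
  have hRanti : AntitoneOn (fun τ => Rf σ ρ f (μ τ)) (Set.Icc 0 t) :=
    fun s hs τ _ hsτ => hRdec s τ hs.1 hsτ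
  exact le_add_div_of_sub_le_integral ht hRanti (DJ_nonneg_of_forall_le (hsub t ht.le) μdag)
    (hD₀ ▸ hD 0 t le_rfl ht)

/-- If μ† minimizes R_f with J(μ†) < ∞, μ_0 = 0, p_0 = 0, t ↦ R_f(μ_t) is
nonincreasing, p_t ∈ ∂J(μ_t) for all t ≥ 0, and the Bregman distance satisfies
D_J^{p_t}(μ†,μ_t) − D_J^{p_s}(μ†,μ_s) ≤ ∫_s^t (R_f(μ†) − R_f(μ_τ)) dτ, then
R_f(μ_t) ≤ R_f(μ†) + J(μ†)/t for every t > 0. -/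
theorem ideal_loss_rate
    {d : ℕ} (Ω : Set (Pd d)) (hΩ : IsCompact Ω)
    (ρ : Measure (Ed d)) [IsProbabilityMeasure ρ]
    (hρ2 : Integrable (fun x : Ed d => ‖x‖ ^ 2) ρ)
    (σ : ℝ → ℝ) (Lσ : NNReal) (hσ : LipschitzWith Lσ σ)
    (f : Ed d → ℝ) (hfm : Measurable f) (hf2 : MemLp f 2 ρ)
    (μdag : SignedMeasure ↥Ω)
    (hmin : ∀ μ' : SignedMeasure ↥Ω, Rf σ ρ f μdag ≤ Rf σ ρ f μ')
    (hJfin : Integrable (fun w : ↥Ω => Vw (w : Pd d)) μdag.totalVariation)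
    (μ : ℝ → SignedMeasure ↥Ω) (p : ℝ → Pd d → ℝ)
    (hμ0 : μ 0 = 0) (hp0 : ∀ w : Pd d, p 0 w = 0)
    (hRdec : ∀ s t : ℝ, 0 ≤ s → s ≤ t → Rf σ ρ f (μ t) ≤ Rf σ ρ f (μ s))
    (hsub : ∀ t : ℝ, 0 ≤ t → ∀ lam : SignedMeasure ↥Ω,
      Jfun (μ t) + sInt (lam - μ t) (fun w => p t (w : Pd d)) ≤ Jfun lam)
    (hD : ∀ s t : ℝ, 0 ≤ s → s < t →
      DJ (p t) μdag (μ t) - DJ (p s) μdag (μ s) ≤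
        ∫ τ in s..t, (Rf σ ρ f μdag - Rf σ ρ f (μ τ))) :
    ∀ t : ℝ, 0 < t → Rf σ ρ f (μ t) ≤ Rf σ ρ f μdag + Jfun μdag / t :=
  ideal_loss_rate_general Ω ρ σ f μdag μ p hμ0 hp0 hRdec hsub hD

end
end

section
/- Let δ > 0 and f^δ ∈ L²(ρ) with ‖f^δ − f‖_{L²(ρ)} ≤ δ, and let μ† ∈ M(Ω) satisfy the orthogonality condition L_ρ(f − Kμ†) = 0 on Ω. Then for every ν ∈ M(Ω), the quantity ∫_Ω L_ρ(f^δ − Kν) d(ν − μ†) is strictly negative whenever ‖f^δ − Kν‖_{L²(ρ)} > δ + ‖f − Kμ†‖_{L²(ρ)}, and also whenever ‖Kμ† − Kν‖_{L²(ρ)} > δ. -/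
/-!
Write `g = f^δ − Kν`, `q = Kμ† − Kν`, `e = f^δ − f` and `r = f − Kμ†`, so that `g = e + r + q`.
By Fubini, `∫ L_ρ g d(ν − μ†) = ⟪g, K(ν − μ†)⟫ = −⟪g, q⟫`, and likewise the orthogonality
condition says `⟪r, q⟫ = 0`. Since `‖e‖ ≤ δ`, Cauchy–Schwarz gives
`⟪g, q⟫ = ‖g‖² − ⟪g, e⟫ − ⟪g, r⟫ ≥ ‖g‖ (‖g‖ − δ − ‖r‖)` and
`⟪g, q⟫ = ⟪e, q⟫ + ‖q‖² ≥ ‖q‖ (‖q‖ − δ)`.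
Fubini applies because on the compact set `Ω` a Lipschitz neuron grows at most linearly in `x`,
and `ρ` has a finite second moment.
-/

open MeasureTheory RealInnerProductSpace

noncomputable section

section SignedIntegral

variable {α : Type*} [MeasurableSpace α]

lemma sInt_eq_integral_sub_integral {τ : SignedMeasure α} {P N : Measure α}
    [IsFiniteMeasure P] [IsFiniteMeasure N] (hτ : τ = P.toSignedMeasure - N.toSignedMeasure)
    {h : α → ℝ} (hh : StronglyMeasurable h) {B : ℝ} (hB : ∀ a, |h a| ≤ B) :
    sInt τ h = ∫ a, h a ∂P - ∫ a, h a ∂N := by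
  have hint : ∀ (Q : Measure α) [IsFiniteMeasure Q], Integrable h Q := fun Q _ =>
    .of_bound hh.aestronglyMeasurable B (.of_forall hB)
  set P' := τ.toJordanDecomposition.posPart
  set N' := τ.toJordanDecomposition.negPart
  have hsum : P + N' = P' + N := by
    rw [← Measure.toSignedMeasure_eq_toSignedMeasure_iff, Measure.toSignedMeasure_add,
      Measure.toSignedMeasure_add, ← sub_eq_sub_iff_add_eq_add, ← hτ]
    exact τ.toSignedMeasure_toJordanDecomposition.symm
  have := congrArg (fun Q => ∫ a, h a ∂Q) hsum
  simp only [integral_add_measure (hint _) (hint _)] at this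
  simp only [sInt]
  linarith

lemma sInt_sub (τ₁ τ₂ : SignedMeasure α) {h : α → ℝ} (hh : StronglyMeasurable h) {B : ℝ}
    (hB : ∀ a, |h a| ≤ B) : sInt (τ₁ - τ₂) h = sInt τ₁ h - sInt τ₂ h := by
  have hint : ∀ (Q : Measure α) [IsFiniteMeasure Q], Integrable h Q := fun Q _ =>
    .of_bound hh.aestronglyMeasurable B (.of_forall hB)
  rw [sInt_eq_integral_sub_integral (P := τ₁.toJordanDecomposition.posPart
      + τ₂.toJordanDecomposition.negPart) (N := τ₁.toJordanDecomposition.negPart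
      + τ₂.toJordanDecomposition.posPart) _ hh hB]
  · simp only [sInt, integral_add_measure (hint _) (hint _)]
    ring
  · conv_lhs => rw [← τ₁.toSignedMeasure_toJordanDecomposition,
      ← τ₂.toSignedMeasure_toJordanDecomposition]
    simp only [JordanDecomposition.toSignedMeasure, Measure.toSignedMeasure_add]
    abel

lemma abs_sInt_le (τ : SignedMeasure α) {h : α → ℝ} {B : ℝ} (hB : ∀ a, |h a| ≤ B) :
    |sInt τ h| ≤ tvNorm τ * B := by
  have hQ : ∀ (Q : Measure α) [IsFiniteMeasure Q], |∫ a, h a ∂Q| ≤ B * Q.real Set.univ :=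
    fun Q _ => norm_integral_le_of_norm_le_const <| .of_forall fun a =>
      (Real.norm_eq_abs _).trans_le (hB a)
  have htv : tvNorm τ = τ.toJordanDecomposition.posPart.real Set.univ
      + τ.toJordanDecomposition.negPart.real Set.univ := by
    simp only [tvNorm, SignedMeasure.totalVariation, Measure.real, Measure.coe_add, Pi.add_apply]
    exact ENNReal.toReal_add (measure_ne_top _ _) (measure_ne_top _ _)
  rw [sInt, htv, add_mul, mul_comm _ B, mul_comm _ B]
  linarith [abs_sub (∫ a, h a ∂τ.toJordanDecomposition.posPart)
    (∫ a, h a ∂τ.toJordanDecomposition.negPart), hQ τ.toJordanDecomposition.posPart,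
    hQ τ.toJordanDecomposition.negPart]

end SignedIntegral

section Kernel

variable {α β : Type*} [MeasurableSpace α] [MeasurableSpace β] {ρ : Measure β}
  {k : α → β → ℝ} {b : β → ℝ}

def kernelOp (k : α → β → ℝ) (μ : SignedMeasure α) (x : β) : ℝ := sInt μ (fun w => k w x)

def kernelAdjoint (ρ : Measure β) (k : α → β → ℝ) (φ : β → ℝ) (w : α) : ℝ :=
  ∫ x, φ x * k w x ∂ρ

lemma kernelOp_sub (hk : StronglyMeasurable (Function.uncurry k))
    (hkb : ∀ w x, |k w x| ≤ b x) (μ₁ μ₂ : SignedMeasure α) (x : β) :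
    kernelOp k (μ₁ - μ₂) x = kernelOp k μ₁ x - kernelOp k μ₂ x :=
  sInt_sub μ₁ μ₂ (hk.comp_measurable (measurable_id.prodMk measurable_const)) (hkb · x)

lemma memLp_kernelOp (hk : StronglyMeasurable (Function.uncurry k))
    (hkb : ∀ w x, |k w x| ≤ b x) (hb : MemLp b 2 ρ) (μ : SignedMeasure α) :
    MemLp (kernelOp k μ) 2 ρ := by
  refine (hb.const_mul (tvNorm μ)).of_le ?_ (.of_forall fun x => ?_)
  · exact (hk.integral_prod_left'.sub hk.integral_prod_left').aestronglyMeasurable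
  · rw [Real.norm_eq_abs, Real.norm_eq_abs]
    exact (abs_sInt_le μ (hkb · x)).trans (le_abs_self _)

variable [SFinite ρ]

lemma integrable_mul_kernel (hk : StronglyMeasurable (Function.uncurry k))
    (hkb : ∀ w x, |k w x| ≤ b x) (hb : MemLp b 2 ρ) {g : β → ℝ} (hg : MemLp g 2 ρ)
    (P : Measure α) [IsFiniteMeasure P] :
    Integrable (fun p : α × β => g p.2 * k p.1 p.2) (P.prod ρ) := by
  refine ((hg.integrable_mul hb).norm.comp_snd P).mono'
    (hg.aestronglyMeasurable.comp_snd.mul hk.aestronglyMeasurable) (.of_forall fun p => ?_)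
  simp only [Pi.mul_apply, norm_mul, Real.norm_eq_abs]
  exact mul_le_mul_of_nonneg_left ((hkb p.1 p.2).trans (le_abs_self _)) (abs_nonneg _)

lemma integral_kernelAdjoint (hk : StronglyMeasurable (Function.uncurry k))
    (hkb : ∀ w x, |k w x| ≤ b x) (hb : MemLp b 2 ρ) {g : β → ℝ} (hg : MemLp g 2 ρ)
    (P : Measure α) [IsFiniteMeasure P] :
    ∫ w, kernelAdjoint ρ k g w ∂P = ∫ x, g x * ∫ w, k w x ∂P ∂ρ := by
  simp only [kernelAdjoint, ← integral_const_mul]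
  exact integral_integral_swap (integrable_mul_kernel hk hkb hb hg P)

lemma integrable_mul_integral_kernel (hk : StronglyMeasurable (Function.uncurry k))
    (hkb : ∀ w x, |k w x| ≤ b x) (hb : MemLp b 2 ρ) {g : β → ℝ} (hg : MemLp g 2 ρ)
    (P : Measure α) [IsFiniteMeasure P] :
    Integrable (fun x => g x * ∫ w, k w x ∂P) ρ := by
  simpa only [← integral_const_mul] using
    (integrable_mul_kernel hk hkb hb hg P).integral_prod_right

lemma sInt_kernelAdjoint (hk : StronglyMeasurable (Function.uncurry k))
    (hkb : ∀ w x, |k w x| ≤ b x) (hb : MemLp b 2 ρ) {g : β → ℝ} (hg : MemLp g 2 ρ)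
    (μ : SignedMeasure α) :
    sInt μ (kernelAdjoint ρ k g) = ∫ x, g x * kernelOp k μ x ∂ρ := by
  simp only [sInt, kernelOp, mul_sub]
  rw [integral_kernelAdjoint hk hkb hb hg, integral_kernelAdjoint hk hkb hb hg,
    integral_sub (integrable_mul_integral_kernel hk hkb hb hg _)
      (integrable_mul_integral_kernel hk hkb hb hg _)]

end Kernel

section InnerProduct

variable {F : Type*} [NormedAddCommGroup F] [InnerProductSpace ℝ F]

lemma inner_add_add_right_pos_of_norm_add_lt {e r q : F} (h : ‖e‖ + ‖r‖ < ‖e + r + q‖) :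
    0 < ⟪e + r + q, q⟫ := by
  set g := e + r + q
  have hq : q = g - e - r := by simp only [g]; abel
  have hge := real_inner_le_norm g e
  have hgr := real_inner_le_norm g r
  have hg : 0 < ‖g‖ := (add_nonneg (norm_nonneg e) (norm_nonneg r)).trans_lt h
  rw [hq, inner_sub_right, inner_sub_right, real_inner_self_eq_norm_sq]
  nlinarith

lemma inner_add_add_right_pos_of_norm_lt {e r q : F} (hrq : ⟪r, q⟫ = 0)
    (h : ‖e‖ < ‖q‖) : 0 < ⟪e + r + q, q⟫ := by
  have heq := abs_real_inner_le_norm e q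
  have hq : 0 < ‖q‖ := (norm_nonneg e).trans_lt h
  rw [inner_add_left, inner_add_left, hrq, real_inner_self_eq_norm_sq]
  nlinarith [neg_abs_le ⟪e, q⟫]

end InnerProduct

section L2

variable {d : ℕ} {ρ : Measure (Ed d)}

lemma L2norm_eq_norm_toLp {g : Ed d → ℝ} (hg : MemLp g 2 ρ) : L2norm ρ g = ‖hg.toLp g‖ := by
  have hsq : ‖hg.toLp g‖ ^ 2 = L2sq ρ g := by
    rw [← real_inner_self_eq_norm_sq, L2.inner_def]
    refine integral_congr_ae ?_
    filter_upwards [hg.coeFn_toLp] with x hx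
    simp [hx, sq]
  rw [L2norm, ← hsq, Real.sqrt_sq (norm_nonneg _)]

lemma integral_mul_eq_inner_toLp {g h : Ed d → ℝ} (hg : MemLp g 2 ρ) (hh : MemLp h 2 ρ) :
    ∫ x, g x * h x ∂ρ = ⟪hg.toLp g, hh.toLp h⟫ := by
  rw [L2.inner_def]
  refine integral_congr_ae ?_
  filter_upwards [hg.coeFn_toLp, hh.coeFn_toLp] with x hgx hhx
  simp [hgx, hhx, mul_comm]

end L2

theorem kernel_noisy_strict_descent {α : Type*} [MeasurableSpace α] {d : ℕ}
    {ρ : Measure (Ed d)} [SFinite ρ] {k : α → Ed d → ℝ} {b : Ed d → ℝ}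
    (hk : StronglyMeasurable (Function.uncurry k)) (hkb : ∀ w x, |k w x| ≤ b x)
    (hb : MemLp b 2 ρ) {f fδ : Ed d → ℝ} (hf : MemLp f 2 ρ) (hfδ : MemLp fδ 2 ρ) {δ : ℝ}
    (hnoise : L2norm ρ (fun x => fδ x - f x) ≤ δ) {μdag : SignedMeasure α}
    (horth : ∀ w, kernelAdjoint ρ k (fun x => f x - kernelOp k μdag x) w = 0)
    (ν : SignedMeasure α) :
    (δ + L2norm ρ (fun x => f x - kernelOp k μdag x) < L2norm ρ (fun x => fδ x - kernelOp k ν x) →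
        sInt (ν - μdag) (kernelAdjoint ρ k (fun x => fδ x - kernelOp k ν x)) < 0) ∧
      (δ < L2norm ρ (fun x => kernelOp k μdag x - kernelOp k ν x) →
        sInt (ν - μdag) (kernelAdjoint ρ k (fun x => fδ x - kernelOp k ν x)) < 0) := by
  have hK := memLp_kernelOp hk hkb hb
  have he : MemLp (fun x => fδ x - f x) 2 ρ := hfδ.sub hf
  have hr : MemLp (fun x => f x - kernelOp k μdag x) 2 ρ := hf.sub (hK μdag)
  have hq : MemLp (fun x => kernelOp k μdag x - kernelOp k ν x) 2 ρ := (hK μdag).sub (hK ν)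
  have hg : MemLp (fun x => fδ x - kernelOp k ν x) 2 ρ := hfδ.sub (hK ν)
  have hdecomp : hg.toLp _ = he.toLp _ + hr.toLp _ + hq.toLp _ := by
    rw [← he.toLp_add hr, ← (he.add hr).toLp_add hq]
    exact MemLp.toLp_congr _ _ (.of_forall fun x => by simp only [Pi.add_apply]; ring)
  have hS : sInt (ν - μdag) (kernelAdjoint ρ k (fun x => fδ x - kernelOp k ν x))
      = -⟪hg.toLp _, hq.toLp _⟫ := by
    rw [sInt_kernelAdjoint hk hkb hb hg, ← integral_mul_eq_inner_toLp hg hq, ← integral_neg]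
    simp only [kernelOp_sub hk hkb]
    congr 1 with x
    ring
  have hrq : ⟪hr.toLp _, hq.toLp _⟫ = 0 := by
    rw [← integral_mul_eq_inner_toLp hr hq]
    simp only [← kernelOp_sub hk hkb]
    rw [← sInt_kernelAdjoint hk hkb hb hr, funext horth]
    simp [sInt]
  rw [L2norm_eq_norm_toLp he] at hnoise
  rw [L2norm_eq_norm_toLp hr, L2norm_eq_norm_toLp hg, L2norm_eq_norm_toLp hq, hS, neg_lt_zero,
    hdecomp]
  exact ⟨fun h => inner_add_add_right_pos_of_norm_add_lt (by linarith),
    fun h => inner_add_add_right_pos_of_norm_lt hrq (by linarith)⟩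

lemma abs_lipschitz_neuron_le {E : Type*} [NormedAddCommGroup E] [InnerProductSpace ℝ E]
    {σ : ℝ → ℝ} {L : NNReal} (hσ : LipschitzWith L σ) {R : ℝ} {w : E × ℝ} (hw : ‖w‖ ≤ R) (x : E) :
    |σ (⟪w.1, x⟫ + w.2)| ≤ (|σ 0| + L * R) * (1 + ‖x‖) := by
  set t := ⟪w.1, x⟫ + w.2
  have hσt : |σ t - σ 0| ≤ L * |t| := by simpa [Real.dist_eq] using hσ.dist_le_mul t 0
  have ht : |t| ≤ R * ‖x‖ + R := by
    have ha : ‖w.1‖ ≤ R := (norm_fst_le w).trans hw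
    have hb : |w.2| ≤ R := (Real.norm_eq_abs _ ▸ norm_snd_le w).trans hw
    calc |t| ≤ ‖w.1‖ * ‖x‖ + |w.2| := (abs_add_le _ _).trans
          (add_le_add_left (abs_real_inner_le_norm _ _) _)
      _ ≤ R * ‖x‖ + R := by gcongr
  have hL := L.coe_nonneg
  nlinarith [abs_sub_abs_le_abs_sub (σ t) (σ 0), abs_nonneg (σ 0), norm_nonneg x,
    mul_le_mul_of_nonneg_left ht hL]

lemma memLp_one_add_norm {E : Type*} [NormedAddCommGroup E] [MeasurableSpace E]
    [OpensMeasurableSpace E] {ρ : Measure E} [IsFiniteMeasure ρ]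
    (hρ2 : Integrable (fun x => ‖x‖ ^ 2) ρ) : MemLp (fun x : E => 1 + ‖x‖) 2 ρ := by
  have hnorm : MemLp (fun x : E => ‖x‖) 2 ρ :=
    (memLp_two_iff_integrable_sq continuous_norm.aestronglyMeasurable).mpr hρ2
  exact (memLp_const (1 : ℝ)).add hnorm

theorem noisy_strict_descent_general
    {d : ℕ} (Ω : Set (Pd d)) (hΩ : IsCompact Ω)
    (ρ : Measure (Ed d)) [IsProbabilityMeasure ρ]
    (hρ2 : Integrable (fun x : Ed d => ‖x‖ ^ 2) ρ)
    (σ : ℝ → ℝ) (Lσ : NNReal) (hσ : LipschitzWith Lσ σ)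
    (f : Ed d → ℝ) (hf2 : MemLp f 2 ρ)
    (δ : ℝ)
    (fδ : Ed d → ℝ) (hfδ2 : MemLp fδ 2 ρ)
    (hnoise : L2norm ρ (fun x => fδ x - f x) ≤ δ)
    (μdag : SignedMeasure ↥Ω)
    (horth : ∀ w ∈ Ω, Lop σ ρ (fun x => f x - Kop σ μdag x) w = 0) :
    ∀ ν : SignedMeasure ↥Ω,
      (δ + L2norm ρ (fun x => f x - Kop σ μdag x) <
          L2norm ρ (fun x => fδ x - Kop σ ν x) →
        sInt (ν - μdag) (fun w => Lop σ ρ (fun x => fδ x - Kop σ ν x) (w : Pd d)) < 0) ∧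
      (δ < L2norm ρ (fun x => Kop σ μdag x - Kop σ ν x) →
        sInt (ν - μdag) (fun w => Lop σ ρ (fun x => fδ x - Kop σ ν x) (w : Pd d)) < 0) := by
  obtain ⟨R, hR⟩ := hΩ.isBounded.exists_norm_le
  let k : ↥Ω → Ed d → ℝ := fun w x => σ (⟪(w : Pd d).1, x⟫ + (w : Pd d).2)
  have hk : StronglyMeasurable (Function.uncurry k) := by
    have hσc := hσ.continuous
    have : Continuous fun p : ↥Ω × Ed d => σ (⟪(p.1 : Pd d).1, p.2⟫ + (p.1 : Pd d).2) := by
      fun_prop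
    exact this.stronglyMeasurable
  have hkb : ∀ w x, |k w x| ≤ (|σ 0| + Lσ * R) * (1 + ‖x‖) := fun w =>
    abs_lipschitz_neuron_le hσ (hR w w.2)
  exact kernel_noisy_strict_descent hk hkb ((memLp_one_add_norm hρ2).const_mul _) hf2 hfδ2
    hnoise (fun w => horth w w.2)

/-- With measurement noise ‖f^δ − f‖_{L²(ρ)} ≤ δ and μ† satisfying the
orthogonality condition for f, for every ν the quantity ∫_Ω L_ρ(f^δ − Kν) d(ν − μ†) is
strictly negative whenever ‖f^δ − Kν‖ > δ + ‖f − Kμ†‖, and whenever ‖Kμ† − Kν‖ > δ. -/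
theorem noisy_strict_descent
    {d : ℕ} (Ω : Set (Pd d)) (hΩ : IsCompact Ω)
    (ρ : Measure (Ed d)) [IsProbabilityMeasure ρ]
    (hρ2 : Integrable (fun x : Ed d => ‖x‖ ^ 2) ρ)
    (σ : ℝ → ℝ) (Lσ : NNReal) (hσ : LipschitzWith Lσ σ)
    (f : Ed d → ℝ) (hfm : Measurable f) (hf2 : MemLp f 2 ρ)
    (δ : ℝ) (hδ : 0 < δ)
    (fδ : Ed d → ℝ) (hfδm : Measurable fδ) (hfδ2 : MemLp fδ 2 ρ)
    (hnoise : L2norm ρ (fun x => fδ x - f x) ≤ δ)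
    (μdag : SignedMeasure ↥Ω)
    (horth : ∀ w ∈ Ω, Lop σ ρ (fun x => f x - Kop σ μdag x) w = 0) :
    ∀ ν : SignedMeasure ↥Ω,
      (δ + L2norm ρ (fun x => f x - Kop σ μdag x) <
          L2norm ρ (fun x => fδ x - Kop σ ν x) →
        sInt (ν - μdag) (fun w => Lop σ ρ (fun x => fδ x - Kop σ ν x) (w : Pd d)) < 0) ∧
      (δ < L2norm ρ (fun x => Kop σ μdag x - Kop σ ν x) →
        sInt (ν - μdag) (fun w => Lop σ ρ (fun x => fδ x - Kop σ ν x) (w : Pd d)) < 0) :=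
  noisy_strict_descent_general Ω hΩ ρ hρ2 σ Lσ hσ f hf2 δ fδ hfδ2 hnoise μdag horth

end
end

section
/- Let ρ^ε be a Borel probability measure on 𝒳 with finite second moment, f ∈ L²(ρ) ∩ L²(ρ^ε), and let μ† ∈ M(Ω) satisfy L_ρ(f − Kμ†) = 0 on Ω. Then for every ν ∈ M(Ω), the quantity ∫_Ω L_{ρ^ε}(f − Kν) d(ν − μ†) is strictly negative whenever ‖f − Kν‖_{L²(ρ^ε)} > ‖f − Kμ†‖_{L²(ρ^ε)}. -/
open MeasureTheory RealInnerProductSpace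

noncomputable section

/-! Write `g = f - Kν` and `h = f - Kμ†`. By Fubini, `∫ L_{ρε} g d(ν - μ†)` is the `L²(ρε)`
pairing of `g` with `K(ν - μ†) = h - g`, and pointwise `g (h - g) ≤ (h² - g²) / 2`, so the pairing
is at most `(‖h‖² - ‖g‖²) / 2 < 0`. Fubini applies because, for parameters in the compact set `Ω`,
the Lipschitz activation grows at most like `1 + ‖x‖`, which is square integrable when `ρε` has
a finite second moment. -/

section SignedIntegral

variable {α : Type*} [MeasurableSpace α]

theorem sInt_eq_integral_sub_integral_s13 {μ : SignedMeasure α} {P N : Measure α}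
    [IsFiniteMeasure P] [IsFiniteMeasure N] (hμ : μ = P.toSignedMeasure - N.toSignedMeasure)
    {g : α → ℝ} (hg : ∀ (Q : Measure α) [IsFiniteMeasure Q], Integrable g Q) :
    sInt μ g = ∫ w, g w ∂P - ∫ w, g w ∂N := by
  set J := μ.toJordanDecomposition
  have hJ : J.posPart.toSignedMeasure - J.negPart.toSignedMeasure = μ :=
    μ.toSignedMeasure_toJordanDecomposition
  have hmeas : J.posPart + N = P + J.negPart := by
    rw [← Measure.toSignedMeasure_eq_toSignedMeasure_iff, Measure.toSignedMeasure_add,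
      Measure.toSignedMeasure_add, ← sub_eq_sub_iff_add_eq_add, hJ, hμ]
  have hint := congrArg (fun Q => ∫ w, g w ∂Q) hmeas
  simp only [integral_add_measure (hg _) (hg _)] at hint
  simp only [sInt]
  linarith

theorem sInt_sub_s13 (μ ν : SignedMeasure α) {g : α → ℝ}
    (hg : ∀ (Q : Measure α) [IsFiniteMeasure Q], Integrable g Q) :
    sInt (μ - ν) g = sInt μ g - sInt ν g := by
  set Jμ := μ.toJordanDecomposition
  set Jν := ν.toJordanDecomposition
  have hsub : μ - ν = (Jμ.posPart + Jν.negPart).toSignedMeasure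
      - (Jμ.negPart + Jν.posPart).toSignedMeasure := by
    have hμ : Jμ.posPart.toSignedMeasure - Jμ.negPart.toSignedMeasure = μ :=
      μ.toSignedMeasure_toJordanDecomposition
    have hν : Jν.posPart.toSignedMeasure - Jν.negPart.toSignedMeasure = ν :=
      ν.toSignedMeasure_toJordanDecomposition
    rw [Measure.toSignedMeasure_add, Measure.toSignedMeasure_add, ← hμ, ← hν]
    abel
  rw [sInt_eq_integral_sub_integral_s13 hsub hg, integral_add_measure (hg _) (hg _),
    integral_add_measure (hg _) (hg _)]
  simp only [sInt]
  ring

end SignedIntegral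

section ParametricIntegral

variable {W X : Type*} [MeasurableSpace W] [MeasurableSpace X] {ρ : Measure X}
  {Φ : W → X → ℝ} {G : X → ℝ}

theorem memLp_integral_of_norm_le {p : ENNReal} (P : Measure W) [IsFiniteMeasure P]
    (hΦ : StronglyMeasurable (Function.uncurry Φ)) (hG : MemLp G p ρ)
    (hΦG : ∀ w x, ‖Φ w x‖ ≤ G x) :
    MemLp (fun x => ∫ w, Φ w x ∂P) p ρ := by
  refine (hG.const_mul (P.real Set.univ)).of_le
    hΦ.integral_prod_left'.aestronglyMeasurable (Filter.Eventually.of_forall fun x => ?_)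
  calc ‖∫ w, Φ w x ∂P‖ ≤ G x * P.real Set.univ :=
        norm_integral_le_of_norm_le_const (Filter.Eventually.of_forall fun w => hΦG w x)
    _ ≤ ‖P.real Set.univ * G x‖ := by rw [mul_comm]; exact Real.le_norm_self _

theorem memLp_sInt_of_norm_le {p : ENNReal} (μ : SignedMeasure W)
    (hΦ : StronglyMeasurable (Function.uncurry Φ)) (hG : MemLp G p ρ)
    (hΦG : ∀ w x, ‖Φ w x‖ ≤ G x) :
    MemLp (fun x => sInt μ (fun w => Φ w x)) p ρ :=
  (memLp_integral_of_norm_le _ hΦ hG hΦG).sub (memLp_integral_of_norm_le _ hΦ hG hΦG)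

theorem integrable_uncurry_mul_of_norm_le (P : Measure W) [IsFiniteMeasure P] [SFinite ρ]
    {g : X → ℝ} (hg : AEStronglyMeasurable g ρ) (hΦ : StronglyMeasurable (Function.uncurry Φ))
    (hΦG : ∀ w x, ‖Φ w x‖ ≤ G x) (hgG : Integrable (fun x => g x * G x) ρ) :
    Integrable (Function.uncurry fun w x => g x * Φ w x) (P.prod ρ) := by
  refine (hgG.norm.comp_snd P).mono' (hg.comp_snd.mul hΦ.aestronglyMeasurable)
    (Filter.Eventually.of_forall fun z => ?_)
  simp only [Function.uncurry, norm_mul, Real.norm_eq_abs]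
  exact mul_le_mul_of_nonneg_left ((hΦG z.1 z.2).trans (le_abs_self _)) (abs_nonneg _)

theorem integral_integral_mul_swap (P : Measure W) [IsFiniteMeasure P] [SFinite ρ]
    {g : X → ℝ} (hg : AEStronglyMeasurable g ρ) (hΦ : StronglyMeasurable (Function.uncurry Φ))
    (hΦG : ∀ w x, ‖Φ w x‖ ≤ G x) (hgG : Integrable (fun x => g x * G x) ρ) :
    ∫ w, ∫ x, g x * Φ w x ∂ρ ∂P = ∫ x, g x * ∫ w, Φ w x ∂P ∂ρ := by
  simp only [← integral_const_mul]
  exact integral_integral_swap (integrable_uncurry_mul_of_norm_le P hg hΦ hΦG hgG)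

theorem integrable_mul_integral_of_norm_le (P : Measure W) [IsFiniteMeasure P] [SFinite ρ]
    {g : X → ℝ} (hg : AEStronglyMeasurable g ρ) (hΦ : StronglyMeasurable (Function.uncurry Φ))
    (hΦG : ∀ w x, ‖Φ w x‖ ≤ G x) (hgG : Integrable (fun x => g x * G x) ρ) :
    Integrable (fun x => g x * ∫ w, Φ w x ∂P) ρ := by
  simp only [← integral_const_mul]
  exact (integrable_uncurry_mul_of_norm_le P hg hΦ hΦG hgG).integral_prod_right

theorem sInt_integral_mul_eq_integral_mul_sInt (μ : SignedMeasure W) [SFinite ρ]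
    {g : X → ℝ} (hg : AEStronglyMeasurable g ρ) (hΦ : StronglyMeasurable (Function.uncurry Φ))
    (hΦG : ∀ w x, ‖Φ w x‖ ≤ G x) (hgG : Integrable (fun x => g x * G x) ρ) :
    sInt μ (fun w => ∫ x, g x * Φ w x ∂ρ) = ∫ x, g x * sInt μ (fun w => Φ w x) ∂ρ := by
  simp only [sInt, mul_sub]
  rw [integral_sub (integrable_mul_integral_of_norm_le _ hg hΦ hΦG hgG)
      (integrable_mul_integral_of_norm_le _ hg hΦ hΦG hgG),
    integral_integral_mul_swap _ hg hΦ hΦG hgG, integral_integral_mul_swap _ hg hΦ hΦG hgG]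

end ParametricIntegral

theorem integral_mul_sub_neg_of_integral_sq_lt {α : Type*} [MeasurableSpace α] {μ : Measure α}
    {u v : α → ℝ} (hu : MemLp u 2 μ) (hv : MemLp v 2 μ)
    (h : ∫ x, v x ^ 2 ∂μ < ∫ x, u x ^ 2 ∂μ) :
    ∫ x, u x * (v x - u x) ∂μ < 0 := by
  have hu2 := (memLp_two_iff_integrable_sq hu.1).mp hu
  have hv2 := (memLp_two_iff_integrable_sq hv.1).mp hv
  calc ∫ x, u x * (v x - u x) ∂μ ≤ ∫ x, (v x ^ 2 - u x ^ 2) / 2 ∂μ :=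
        integral_mono (hu.integrable_mul (hv.sub hu)) ((hv2.sub hu2).div_const 2)
          fun x => by nlinarith [sq_nonneg (u x - v x)]
    _ = ((∫ x, v x ^ 2 ∂μ) - ∫ x, u x ^ 2 ∂μ) / 2 := by rw [integral_div, integral_sub hv2 hu2]
    _ < 0 := by linarith

theorem LipschitzWith.abs_le_abs_add_mul_abs {σ : ℝ → ℝ} {L : NNReal} (hσ : LipschitzWith L σ)
    (t : ℝ) : |σ t| ≤ |σ 0| + L * |t| := by
  have h := hσ.dist_le_mul t 0
  rw [Real.dist_eq, Real.dist_eq, sub_zero] at h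
  linarith [abs_sub_abs_le_abs_sub (σ t) (σ 0)]

theorem abs_activation_le {E : Type*} [NormedAddCommGroup E] [InnerProductSpace ℝ E]
    {σ : ℝ → ℝ} {L : NNReal} (hσ : LipschitzWith L σ) {w : E × ℝ} {B : ℝ} (hw : ‖w‖ ≤ B)
    (x : E) : |σ (⟪w.1, x⟫ + w.2)| ≤ (|σ 0| + L * B) * (1 + ‖x‖) := by
  have hB : 0 ≤ B := (norm_nonneg w).trans hw
  have hpre : |⟪w.1, x⟫ + w.2| ≤ B * (1 + ‖x‖) :=
    calc |⟪w.1, x⟫ + w.2| ≤ ‖w.1‖ * ‖x‖ + ‖w.2‖ :=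
          (abs_add_le _ _).trans (add_le_add (abs_real_inner_le_norm _ _) le_rfl)
      _ ≤ B * ‖x‖ + B := by
          gcongr
          exacts [(norm_fst_le w).trans hw, (norm_snd_le w).trans hw]
      _ = B * (1 + ‖x‖) := by ring
  have hσ0 : |σ 0| ≤ |σ 0| * (1 + ‖x‖) := le_mul_of_one_le_right (abs_nonneg _) (by simp)
  calc |σ (⟪w.1, x⟫ + w.2)| ≤ |σ 0| + L * (B * (1 + ‖x‖)) :=
        (hσ.abs_le_abs_add_mul_abs _).trans (by gcongr)
    _ ≤ (|σ 0| + L * B) * (1 + ‖x‖) := by linarith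

theorem continuous_activation {E : Type*} [NormedAddCommGroup E] [InnerProductSpace ℝ E]
    {σ : ℝ → ℝ} (hσ : Continuous σ) :
    Continuous fun p : (E × ℝ) × E => σ (⟪p.1.1, p.2⟫ + p.1.2) := by
  fun_prop

theorem biased_strict_descent_general
    {d : ℕ} (Ω : Set (Pd d)) (hΩ : IsCompact Ω)
    (ρε : Measure (Ed d)) [IsProbabilityMeasure ρε]
    (hρε2 : Integrable (fun x : Ed d => ‖x‖ ^ 2) ρε)
    (σ : ℝ → ℝ) (Lσ : NNReal) (hσ : LipschitzWith Lσ σ)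
    (f : Ed d → ℝ) (hf2' : MemLp f 2 ρε)
    (μdag : SignedMeasure ↥Ω) :
    ∀ ν : SignedMeasure ↥Ω,
      L2norm ρε (fun x => f x - Kop σ μdag x) < L2norm ρε (fun x => f x - Kop σ ν x) →
        sInt (ν - μdag) (fun w => Lop σ ρε (fun x => f x - Kop σ ν x) (w : Pd d)) < 0 := by
  intro ν hlt
  obtain ⟨B, hB⟩ := hΩ.isBounded.exists_norm_le
  let Φ : Ω → Ed d → ℝ := fun w x => σ (⟪(w : Pd d).1, x⟫ + (w : Pd d).2)
  let G : Ed d → ℝ := fun x => (|σ 0| + Lσ * B) * (1 + ‖x‖)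
  have hΦ : StronglyMeasurable (Function.uncurry Φ) :=
    ((continuous_activation hσ.continuous).comp
      (continuous_subtype_val.prodMap continuous_id)).stronglyMeasurable
  have hΦG : ∀ w x, ‖Φ w x‖ ≤ G x := fun w x =>
    (Real.norm_eq_abs _).trans_le (abs_activation_le hσ (hB w w.2) x)
  have hnorm : MemLp (fun x : Ed d => ‖x‖) 2 ρε :=
    (memLp_two_iff_integrable_sq continuous_norm.aestronglyMeasurable).mpr hρε2
  have hG : MemLp G 2 ρε := ((memLp_const (1 : ℝ)).add hnorm).const_mul _
  have hK : ∀ μ : SignedMeasure Ω, MemLp (Kop σ μ) 2 ρε := fun μ =>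
    memLp_sInt_of_norm_le μ hΦ hG hΦG
  have hgν : MemLp (fun x => f x - Kop σ ν x) 2 ρε := hf2'.sub (hK ν)
  have hKsub : ∀ x, sInt (ν - μdag) (fun w => Φ w x) = Kop σ ν x - Kop σ μdag x := fun x =>
    sInt_sub_s13 ν μdag fun _ _ =>
      .of_bound (hΦ.comp_measurable measurable_prodMk_right).aestronglyMeasurable (G x)
        (Filter.Eventually.of_forall fun w => hΦG w x)
  calc sInt (ν - μdag) (fun w => Lop σ ρε (fun x => f x - Kop σ ν x) (w : Pd d))
      = ∫ x, (f x - Kop σ ν x) * sInt (ν - μdag) (fun w => Φ w x) ∂ρε :=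
        sInt_integral_mul_eq_integral_mul_sInt _ hgν.1 hΦ hΦG (hgν.integrable_mul hG)
    _ = ∫ x, (f x - Kop σ ν x) * ((f x - Kop σ μdag x) - (f x - Kop σ ν x)) ∂ρε := by
        simp only [hKsub, sub_sub_sub_cancel_left]
    _ < 0 := by
        refine integral_mul_sub_neg_of_integral_sq_lt hgν (hf2'.sub (hK μdag)) ?_
        rwa [L2norm, L2norm, L2sq, L2sq,
          Real.sqrt_lt_sqrt_iff (integral_nonneg fun x => sq_nonneg _)] at hlt

/-- For a biased sampling measure ρ^ε, if μ† satisfies the orthogonality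
condition for ρ, then for every ν the quantity ∫_Ω L_{ρ^ε}(f − Kν) d(ν − μ†) is strictly
negative whenever ‖f − Kν‖_{L²(ρ^ε)} > ‖f − Kμ†‖_{L²(ρ^ε)}. -/
theorem biased_strict_descent
    {d : ℕ} (Ω : Set (Pd d)) (hΩ : IsCompact Ω)
    (ρ : Measure (Ed d)) [IsProbabilityMeasure ρ]
    (hρ2 : Integrable (fun x : Ed d => ‖x‖ ^ 2) ρ)
    (ρε : Measure (Ed d)) [IsProbabilityMeasure ρε]
    (hρε2 : Integrable (fun x : Ed d => ‖x‖ ^ 2) ρε)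
    (σ : ℝ → ℝ) (Lσ : NNReal) (hσ : LipschitzWith Lσ σ)
    (f : Ed d → ℝ) (hfm : Measurable f) (hf2 : MemLp f 2 ρ) (hf2' : MemLp f 2 ρε)
    (μdag : SignedMeasure ↥Ω)
    (horth : ∀ w ∈ Ω, Lop σ ρ (fun x => f x - Kop σ μdag x) w = 0) :
    ∀ ν : SignedMeasure ↥Ω,
      L2norm ρε (fun x => f x - Kop σ μdag x) < L2norm ρε (fun x => f x - Kop σ ν x) →
        sInt (ν - μdag) (fun w => Lop σ ρε (fun x => f x - Kop σ ν x) (w : Pd d)) < 0 :=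
  biased_strict_descent_general Ω hΩ ρε hρε2 σ Lσ hσ f hf2' μdag
end
end

section
/- Let {Ω_n^N}_{n=1}^N be a Borel partition of Ω with points ω_n^N = (a_n^N, b_n^N) ∈ Ω_n^N, and for μ† ∈ M(Ω) define μ_N = Σ_{n=1}^N μ†(Ω_n^N) δ_{ω_n^N}. Then ‖Kμ_N − Kμ†‖²_{L²(ρ)} ≤ ‖μ†‖²_{M(Ω)} · (max_{1≤n≤N} diam(Ω_n^N))² · Lip(σ)² · ∫_𝒳 max(1, ‖x‖)² dρ(x), where diam is taken with respect to the metric ‖(a,b) − (a′,b′)‖ = ‖a − a′‖ + |b − b′| on ℝ^d × ℝ. -/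
open MeasureTheory RealInnerProductSpace

noncomputable section

/-- The diameter of a set of parameters with respect to the metric
‖(a,b) − (a′,b′)‖ = ‖a − a′‖ + |b − b′| on ℝ^d × ℝ. -/
def diam1 {d : ℕ} (S : Set (Pd d)) : ℝ :=
  sSup {r : ℝ | ∃ p ∈ S, ∃ q ∈ S, r = ‖p.1 - q.1‖ + |p.2 - q.2|}

/-!
On each cell `Ω_n` of the partition, the discretization replaces `μ†|_{Ω_n}` by the point mass
`μ†(Ω_n) δ_{ω_n}`, so for fixed `x` the error `(Kμ_N − Kμ†)(x)` is a sum over the cells of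
integrals of `σ(a_nᵀx + b_n) − σ(aᵀx + b)` against the positive and negative parts of `μ†`.
The integrand is at most `Lip(σ) · diam(Ω_n) · max(1, ‖x‖)` on `Ω_n`, so
`|(Kμ_N − Kμ†)(x)| ≤ ‖μ†‖ · max_n diam(Ω_n) · Lip(σ) · max(1, ‖x‖)`; squaring and integrating
against `ρ` gives the bound.
-/

section SignedIntegral

variable {α : Type*} [MeasurableSpace α] {g : α → ℝ}

theorem MeasureTheory.SignedMeasure.apply_eq_posPart_sub_negPart (μ : SignedMeasure α) {s : Set α}
    (hs : MeasurableSet s) :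
    μ s = μ.toJordanDecomposition.posPart.real s - μ.toJordanDecomposition.negPart.real s := by
  conv_lhs => rw [← μ.toSignedMeasure_toJordanDecomposition]
  rw [JordanDecomposition.toSignedMeasure, sub_apply,
    Measure.toSignedMeasure_apply_measurable hs, Measure.toSignedMeasure_apply_measurable hs]

theorem tvNorm_eq_posPart_add_negPart (μ : SignedMeasure α) :
    tvNorm μ =
      μ.toJordanDecomposition.posPart.real Set.univ +
        μ.toJordanDecomposition.negPart.real Set.univ :=
  measureReal_add_apply

theorem Measurable.integrable_of_forall_norm_le (hg : Measurable g) {C : ℝ}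
    (hC : ∀ w, ‖g w‖ ≤ C) (ν : Measure α) [IsFiniteMeasure ν] : Integrable g ν :=
  .of_bound hg.aestronglyMeasurable C (ae_of_all _ hC)

theorem sInt_eq_integral_sub_integral_s19 {μ : SignedMeasure α} (ν₁ ν₂ : Measure α)
    [IsFiniteMeasure ν₁] [IsFiniteMeasure ν₂]
    (hμ : μ = ν₁.toSignedMeasure - ν₂.toSignedMeasure) (hg : Measurable g) {C : ℝ}
    (hC : ∀ w, ‖g w‖ ≤ C) :
    sInt μ g = ∫ w, g w ∂ν₁ - ∫ w, g w ∂ν₂ := by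
  set pos := μ.toJordanDecomposition.posPart
  set neg := μ.toJordanDecomposition.negPart
  have hcross : pos + ν₂ = ν₁ + neg := by
    rw [← Measure.toSignedMeasure_eq_toSignedMeasure_iff, Measure.toSignedMeasure_add,
      Measure.toSignedMeasure_add, ← sub_eq_sub_iff_add_eq_add, ← hμ]
    exact μ.toSignedMeasure_toJordanDecomposition
  have := congrArg (fun ν => ∫ w, g w ∂ν) hcross
  simp only [integral_add_measure (hg.integrable_of_forall_norm_le hC _)
    (hg.integrable_of_forall_norm_le hC _)] at this
  rw [sInt]
  linarith

theorem sInt_add (μ ν : SignedMeasure α) (hg : Measurable g) {C : ℝ} (hC : ∀ w, ‖g w‖ ≤ C) :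
    sInt (μ + ν) g = sInt μ g + sInt ν g := by
  have hdecomp : μ + ν =
      (μ.toJordanDecomposition.posPart + ν.toJordanDecomposition.posPart).toSignedMeasure -
        (μ.toJordanDecomposition.negPart + ν.toJordanDecomposition.negPart).toSignedMeasure := by
    rw [Measure.toSignedMeasure_add, Measure.toSignedMeasure_add, add_sub_add_comm]
    conv_lhs => rw [← μ.toSignedMeasure_toJordanDecomposition,
      ← ν.toSignedMeasure_toJordanDecomposition]
    rfl
  have hint := hg.integrable_of_forall_norm_le hC
  rw [sInt_eq_integral_sub_integral_s19 _ _ hdecomp hg hC, integral_add_measure (hint _) (hint _),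
    integral_add_measure (hint _) (hint _), sInt, sInt]
  ring

theorem sInt_smul_dirac (c : ℝ) (a : α) (hg : Measurable g) {C : ℝ} (hC : ∀ w, ‖g w‖ ≤ C) :
    sInt (c • (Measure.dirac a).toSignedMeasure) g = c * g a := by
  have hdecomp : c • (Measure.dirac a).toSignedMeasure =
      (c.toNNReal • Measure.dirac a).toSignedMeasure -
        ((-c).toNNReal • Measure.dirac a).toSignedMeasure := by
    ext s hs
    simp only [smul_apply, sub_apply, Measure.toSignedMeasure_apply_measurable hs,
      measureReal_nnreal_smul_apply, Real.coe_toNNReal', smul_eq_mul, ← sub_mul,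
      max_zero_sub_max_neg_zero_eq_self]
  rw [sInt_eq_integral_sub_integral_s19 _ _ hdecomp hg hC, integral_smul_nnreal_measure,
    integral_smul_nnreal_measure, integral_dirac' _ _ hg.stronglyMeasurable, NNReal.smul_def,
    NNReal.smul_def, smul_eq_mul, smul_eq_mul, ← sub_mul, Real.coe_toNNReal',
    Real.coe_toNNReal', max_zero_sub_max_neg_zero_eq_self]

theorem sInt_sum_smul_dirac {ι : Type*} [Fintype ι] (c : ι → ℝ) (a : ι → α)
    (hg : Measurable g) {C : ℝ} (hC : ∀ w, ‖g w‖ ≤ C) :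
    sInt (∑ i, c i • (Measure.dirac (a i)).toSignedMeasure) g = ∑ i, c i * g (a i) := by
  have := map_sum (AddMonoidHom.mk' (sInt · g) fun μ ν => sInt_add μ ν hg hC)
    (fun i => c i • (Measure.dirac (a i)).toSignedMeasure) Finset.univ
  simpa only [AddMonoidHom.mk'_apply, sInt_smul_dirac _ _ hg hC] using this

end SignedIntegral

section Partition

open Function

variable {α ι : Type*} [MeasurableSpace α] [Fintype ι] {P : ι → Set α} {ω : ι → α} {g : α → ℝ}
  {ε : ℝ}

theorem abs_sum_measureReal_mul_sub_integral_le (ν : Measure α) [IsFiniteMeasure ν]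
    (hPmeas : ∀ i, MeasurableSet (P i)) (hPdisj : Pairwise (Disjoint on P))
    (hPcover : ⋃ i, P i = Set.univ) (hg : Integrable g ν)
    (hosc : ∀ i, ∀ w ∈ P i, |g (ω i) - g w| ≤ ε) :
    |∑ i, ν.real (P i) * g (ω i) - ∫ w, g w ∂ν| ≤ ε * ν.real Set.univ := by
  have hsplit : ∫ w, g w ∂ν = ∑ i, ∫ w in P i, g w ∂ν := by
    rw [← setIntegral_univ, ← hPcover,
      integral_iUnion_fintype hPmeas hPdisj fun _ => hg.integrableOn]
  have hcell (i : ι) : ν.real (P i) * g (ω i) - ∫ w in P i, g w ∂ν =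
      ∫ w in P i, (g (ω i) - g w) ∂ν := by
    rw [integral_sub (integrable_const _) hg.integrableOn, setIntegral_const, smul_eq_mul]
  calc |∑ i, ν.real (P i) * g (ω i) - ∫ w, g w ∂ν|
      = |∑ i, ∫ w in P i, (g (ω i) - g w) ∂ν| := by
        rw [hsplit, ← Finset.sum_sub_distrib]
        simp only [hcell]
    _ ≤ ∑ i, |∫ w in P i, (g (ω i) - g w) ∂ν| := Finset.abs_sum_le_sum_abs _ _
    _ ≤ ∑ i, ε * ν.real (P i) := Finset.sum_le_sum fun i _ => by
        simpa only [Real.norm_eq_abs] using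
          norm_setIntegral_le_of_norm_le_const (f := fun w => g (ω i) - g w)
            (measure_lt_top ν _) (hosc i)
    _ = ε * ν.real Set.univ := by
        rw [← Finset.mul_sum, ← hPcover, measureReal_iUnion_fintype hPdisj hPmeas]

theorem abs_sum_apply_mul_sub_sInt_le (μ : SignedMeasure α)
    (hPmeas : ∀ i, MeasurableSet (P i)) (hPdisj : Pairwise (Disjoint on P))
    (hPcover : ⋃ i, P i = Set.univ) (hg : Measurable g) {C : ℝ} (hC : ∀ w, ‖g w‖ ≤ C)
    (hosc : ∀ i, ∀ w ∈ P i, |g (ω i) - g w| ≤ ε) :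
    |∑ i, μ (P i) * g (ω i) - sInt μ g| ≤ ε * tvNorm μ := by
  set pos := μ.toJordanDecomposition.posPart
  set neg := μ.toJordanDecomposition.negPart
  have hpos := abs_sum_measureReal_mul_sub_integral_le pos hPmeas hPdisj hPcover
    (hg.integrable_of_forall_norm_le hC pos) hosc
  have hneg := abs_sum_measureReal_mul_sub_integral_le neg hPmeas hPdisj hPcover
    (hg.integrable_of_forall_norm_le hC neg) hosc
  have hsplit : ∑ i, μ (P i) * g (ω i) - sInt μ g =
      (∑ i, pos.real (P i) * g (ω i) - ∫ w, g w ∂pos) -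
        (∑ i, neg.real (P i) * g (ω i) - ∫ w, g w ∂neg) := by
    simp only [SignedMeasure.apply_eq_posPart_sub_negPart μ (hPmeas _), sub_mul,
      Finset.sum_sub_distrib, sInt]
    ring
  rw [hsplit, tvNorm_eq_posPart_add_negPart, mul_add]
  exact (abs_sub _ _).trans (add_le_add hpos hneg)

end Partition

theorem abs_sub_comp_inner_add_le {E : Type*} [NormedAddCommGroup E] [InnerProductSpace ℝ E]
    {σ : ℝ → ℝ} {L : NNReal} (hσ : LipschitzWith L σ) (a a' x : E) (b b' : ℝ) :
    |σ (⟪a, x⟫ + b) - σ (⟪a', x⟫ + b')| ≤ L * (‖a - a'‖ + |b - b'|) * max 1 ‖x‖ := by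
  have harg : |(⟪a, x⟫ + b) - (⟪a', x⟫ + b')| ≤ (‖a - a'‖ + |b - b'|) * max 1 ‖x‖ :=
    calc |(⟪a, x⟫ + b) - (⟪a', x⟫ + b')| = |⟪a - a', x⟫ + (b - b')| := by
          rw [inner_sub_left]; ring_nf
      _ ≤ ‖a - a'‖ * ‖x‖ + |b - b'| :=
          (abs_add_le _ _).trans (add_le_add_left (abs_real_inner_le_norm _ _) _)
      _ ≤ (‖a - a'‖ + |b - b'|) * max 1 ‖x‖ := by
          nlinarith [le_max_left 1 ‖x‖, le_max_right 1 ‖x‖, norm_nonneg (a - a'),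
            abs_nonneg (b - b')]
  calc |σ (⟪a, x⟫ + b) - σ (⟪a', x⟫ + b')| ≤ L * |(⟪a, x⟫ + b) - (⟪a', x⟫ + b')| := by
        simpa only [Real.dist_eq] using hσ.dist_le_mul (⟪a, x⟫ + b) (⟪a', x⟫ + b')
    _ ≤ L * (‖a - a'‖ + |b - b'|) * max 1 ‖x‖ := by
        rw [mul_assoc]; gcongr

theorem norm_sub_add_abs_sub_le_diam1 {d : ℕ} {S : Set (Pd d)} (hS : Bornology.IsBounded S)
    {p q : Pd d} (hp : p ∈ S) (hq : q ∈ S) : ‖p.1 - q.1‖ + |p.2 - q.2| ≤ diam1 S := by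
  refine le_csSup ?_ ⟨p, hp, q, hq, rfl⟩
  obtain ⟨C, hC⟩ := Metric.isBounded_iff.mp hS
  refine ⟨2 * C, ?_⟩
  rintro r ⟨p, hp, q, hq, rfl⟩
  have h₁ : ‖p.1 - q.1‖ ≤ dist p q := by rw [← dist_eq_norm, Prod.dist_eq]; exact le_max_left _ _
  have h₂ : |p.2 - q.2| ≤ dist p q := by rw [← Real.dist_eq, Prod.dist_eq]; exact le_max_right _ _
  linarith [hC hp hq]

theorem integrable_max_one_norm_sq {E : Type*} [NormedAddCommGroup E] [MeasurableSpace E]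
    [OpensMeasurableSpace E] {ρ : Measure E} [IsFiniteMeasure ρ]
    (hρ2 : Integrable (fun x => ‖x‖ ^ 2) ρ) : Integrable (fun x => max 1 ‖x‖ ^ 2) ρ := by
  refine ((integrable_const 1).add hρ2).mono' (by fun_prop) (ae_of_all _ fun x => ?_)
  rw [Real.norm_of_nonneg (by positivity), Pi.add_apply]
  rcases max_cases 1 ‖x‖ with ⟨h, -⟩ | ⟨h, -⟩ <;> rw [h] <;> nlinarith [sq_nonneg ‖x‖]

theorem L2sq_le_of_abs_le_mul_max_one_norm {d : ℕ} {ρ : Measure (Ed d)} [IsFiniteMeasure ρ]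
    (hρ2 : Integrable (fun x : Ed d => ‖x‖ ^ 2) ρ) {g : Ed d → ℝ} {c : ℝ}
    (hg : ∀ x, |g x| ≤ c * max 1 ‖x‖) :
    L2sq ρ g ≤ c ^ 2 * ∫ x, max 1 ‖x‖ ^ 2 ∂ρ := by
  rw [L2sq, ← integral_const_mul]
  refine integral_mono_of_nonneg (ae_of_all _ fun x => sq_nonneg _)
    ((integrable_max_one_norm_sq hρ2).const_mul _) (ae_of_all _ fun x => ?_)
  dsimp only
  rw [← mul_pow, ← sq_abs]
  exact pow_le_pow_left₀ (abs_nonneg _) (hg x) 2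

/-- For a Borel partition {Ω_n}_{n=1}^N of Ω with points ω_n ∈ Ω_n and the
discretization μ_N = Σ_n μ†(Ω_n) δ_{ω_n}, one has
‖Kμ_N − Kμ†‖²_{L²(ρ)} ≤ ‖μ†‖²_{M(Ω)} · (max_n diam(Ω_n))² · Lip(σ)² · ∫ max(1,‖x‖)² dρ. -/
theorem discretization_error_bound
    {d : ℕ} (Ω : Set (Pd d)) (hΩ : IsCompact Ω)
    (ρ : Measure (Ed d)) [IsProbabilityMeasure ρ]
    (hρ2 : Integrable (fun x : Ed d => ‖x‖ ^ 2) ρ)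
    (σ : ℝ → ℝ) (Lσ : NNReal) (hσ : LipschitzWith Lσ σ)
    (N : ℕ) (P : Fin N → Set ↥Ω)
    (hPmeas : ∀ n, MeasurableSet (P n))
    (hPdisj : ∀ n m : Fin N, n ≠ m → Disjoint (P n) (P m))
    (hPcover : (⋃ n, P n) = Set.univ)
    (ω : Fin N → ↥Ω) (hω : ∀ n, ω n ∈ P n)
    (μdag : SignedMeasure ↥Ω) :
    L2sq ρ (fun x =>
        Kop σ (∑ n : Fin N, μdag (P n) • (Measure.dirac (ω n)).toSignedMeasure) x -
          Kop σ μdag x) ≤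
      tvNorm μdag ^ 2 * (⨆ n : Fin N, diam1 (Subtype.val '' P n)) ^ 2 * (Lσ : ℝ) ^ 2 *
        ∫ x, max 1 ‖x‖ ^ 2 ∂ρ := by
  have : CompactSpace Ω := isCompact_iff_compactSpace.mp hΩ
  set D := ⨆ n : Fin N, diam1 (Subtype.val '' P n)
  have hdiam (n : Fin N) (w : Ω) (hw : w ∈ P n) :
      ‖(ω n : Pd d).1 - (w : Pd d).1‖ + |(ω n : Pd d).2 - (w : Pd d).2| ≤ D :=
    (norm_sub_add_abs_sub_le_diam1 (hΩ.isBounded.subset (Subtype.coe_image_subset _ _))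
      ⟨ω n, hω n, rfl⟩ ⟨w, hw, rfl⟩).trans
      (le_ciSup (Finite.bddAbove_range fun n => diam1 (Subtype.val '' P n)) n)
  have hpointwise (x : Ed d) :
      |Kop σ (∑ n, μdag (P n) • (Measure.dirac (ω n)).toSignedMeasure) x - Kop σ μdag x| ≤
        tvNorm μdag * D * Lσ * max 1 ‖x‖ := by
    have hcont : Continuous fun w : Ω => σ (⟪(w : Pd d).1, x⟫ + (w : Pd d).2) := by
      have := hσ.continuous
      fun_prop
    obtain ⟨C, hC⟩ := isCompact_univ.exists_bound_of_continuousOn hcont.continuousOn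
    rw [Kop, Kop, sInt_sum_smul_dirac _ _ hcont.measurable fun w => hC w trivial]
    refine (abs_sum_apply_mul_sub_sInt_le μdag hPmeas hPdisj hPcover hcont.measurable
      (fun w => hC w trivial) (ε := Lσ * D * max 1 ‖x‖) fun n w hw => ?_).trans_eq (by ring)
    refine (abs_sub_comp_inner_add_le hσ _ _ _ _ _).trans ?_
    gcongr
    exact hdiam n w hw
  exact (L2sq_le_of_abs_le_mul_max_one_norm hρ2 hpointwise).trans_eq (by ring)
end
end
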